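/- arXiv:1909.12738 — 7 statements merged into one kernel-verified Lean document; each statement's English description precedes it below -/
import Mathlib

section
/- The projection of a sequence of valid firings of the trace workflow W^τ is a sequence of valid firings of the original workflow W: if C is a sequence of valid firings in W^τ starting from a state whose marking restricted to the original places puts a token only in start, then Π_τ(C), obtained by restricting all markings to the original places P and mapping each injected transition t_{e_i} back to the original transition t_i, is a sequence of valid firings in W. -/
/-- A DAW-net. -/
structure DAWNet (P T V O : Type) where
  pre : T → Set P
  post : T → Set P
  wr : T → V → Option (Set O)
  gd : T → ((V → Option O) → Prop)

/-- Valid firing of a transition `t` from state `(M, η)` to state `(M', η')`. -/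
def ValidFiring {P T V O : Type} (W : DAWNet P T V O)
    (M : P → ℕ) (η : V → Option O) (t : T) (M' : P → ℕ) (η' : V → Option O) : Prop :=
  (∀ p ∈ W.pre t, 0 < M p) ∧
  W.gd t η ∧
  (∀ p, (p ∈ W.pre t ∧ p ∉ W.post t → M' p = M p - 1) ∧
        (p ∈ W.post t ∧ p ∉ W.pre t → M' p = M p + 1) ∧
        ((p ∈ W.pre t ↔ p ∈ W.post t) → M' p = M p)) ∧
  (∀ v (s : Set O), W.wr t v = some s →
      (s = ∅ → η' v = none) ∧ (s.Nonempty → ∃ o ∈ s, η' v = some o)) ∧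
  (∀ v, W.wr t v = none → η' v = η v)

/-- `FiringSeq W s l e` : `l` lists the successive (transition, reached state) steps of a
sequence of valid firings of `W` from state `s` to state `e`. -/
inductive FiringSeq {P T V O : Type} (W : DAWNet P T V O) :
    ((P → ℕ) × (V → Option O)) → List (T × (P → ℕ) × (V → Option O)) →
    ((P → ℕ) × (V → Option O)) → Prop
  | nil (s : (P → ℕ) × (V → Option O)) : FiringSeq W s [] s
  | cons {s : (P → ℕ) × (V → Option O)} {t : T} {M' : P → ℕ} {η' : V → Option O}
      {l : List (T × (P → ℕ) × (V → Option O))} {e : (P → ℕ) × (V → Option O)} :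
      ValidFiring W s.1 s.2 t M' η' → FiringSeq W (M', η') l e →
      FiringSeq W s ((t, M', η') :: l) e

/-- Restriction of a marking of the trace workflow to the original places. -/
def projM {P : Type} {n : ℕ} (M : (P ⊕ Fin (n+1)) → ℕ) : P → ℕ := fun p => M (Sum.inl p)

/-- Projection of a step of the trace workflow: injected transitions `t_{e_i}` are mapped
back to the original transitions, markings are restricted to the original places. -/
def projStep {P T V O : Type} {n : ℕ} (tr : Fin n → T) :
    ((T ⊕ Fin n) × ((P ⊕ Fin (n+1)) → ℕ) × (V → Option O)) →
      (T × (P → ℕ) × (V → Option O)) :=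
  fun x => (Sum.elim id tr x.1, projM x.2.1, x.2.2)

/-!
Every transition of `W^τ` refines its image in `W` along the inclusion `Sum.inl` of the
original places: through that inclusion it consumes and produces exactly what its image does,
its guard is stronger and its write sets are smaller. Such a refinement maps a valid firing to a
valid firing on the restricted markings (the fresh places `p_{e_i}` are simply forgotten), and
the projection of a firing sequence follows step by step.
-/

namespace DAWNet

variable {P P' T T' V O : Type}

structure TransitionRefines (W' : DAWNet P' T' V O) (t' : T') (W : DAWNet P T V O) (t : T)
    (ι : P → P') : Prop where
  preimage_pre : ι ⁻¹' W'.pre t' = W.pre t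
  preimage_post : ι ⁻¹' W'.post t' = W.post t
  gd_imp : ∀ η, W'.gd t' η → W.gd t η
  wr_eq_none_iff : ∀ v, W'.wr t' v = none ↔ W.wr t v = none
  wr_subset : ∀ v s s', W'.wr t' v = some s → W.wr t v = some s' → s ⊆ s' ∧ (s = ∅ ↔ s' = ∅)

theorem TransitionRefines.validFiring_comp {W' : DAWNet P' T' V O} {t' : T'}
    {W : DAWNet P T V O} {t : T} {ι : P → P'} (hr : W'.TransitionRefines t' W t ι)
    {M M' : P' → ℕ} {η η' : V → Option O} (hf : ValidFiring W' M η t' M' η') :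
    ValidFiring W (M ∘ ι) η t (M' ∘ ι) η' := by
  obtain ⟨henabled, hgd, hmark, hwr, hkeep⟩ := hf
  have hpre : ∀ p, ι p ∈ W'.pre t' ↔ p ∈ W.pre t := fun p => Set.ext_iff.mp hr.preimage_pre p
  have hpost : ∀ p, ι p ∈ W'.post t' ↔ p ∈ W.post t :=
    fun p => Set.ext_iff.mp hr.preimage_post p
  refine ⟨fun p hp => henabled _ ((hpre p).mpr hp), hr.gd_imp η hgd, fun p => ?_, ?_,
    fun v hv => hkeep v ((hr.wr_eq_none_iff v).mpr hv)⟩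
  · have hmark_p := hmark (ι p)
    simp only [hpre, hpost] at hmark_p
    exact hmark_p
  · intro v s' hv
    obtain ⟨s, hs⟩ := Option.ne_none_iff_exists'.mp
      (mt (hr.wr_eq_none_iff v).mp (by simp [hv]))
    obtain ⟨hsub, hempty⟩ := hr.wr_subset v s s' hs hv
    obtain ⟨hnone, hsome⟩ := hwr v s hs
    refine ⟨fun h => hnone (hempty.mpr h), fun h => ?_⟩
    obtain ⟨o, ho, hη⟩ := hsome (Set.nonempty_iff_ne_empty.mpr
      (mt hempty.mp h.ne_empty))
    exact ⟨o, hsub ho, hη⟩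

end DAWNet

theorem preimage_inl_image_union_inr {α β : Type} (s : Set α) (b : β) :
    Sum.inl ⁻¹' (Sum.inl '' s ∪ {Sum.inr b}) = s := by
  ext a
  simp

theorem FiringSeq.map {P P' T T' V O : Type} {W' : DAWNet P' T' V O} {W : DAWNet P T V O}
    (f : T' → T) (g : (P' → ℕ) → (P → ℕ))
    (hstep : ∀ {M η t' M' η'}, ValidFiring W' M η t' M' η' →
      ValidFiring W (g M) η (f t') (g M') η')
    {s l e} (h : FiringSeq W' s l e) :
    FiringSeq W (g s.1, s.2) (l.map fun x => (f x.1, g x.2.1, x.2.2)) (g e.1, e.2) := by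
  induction h with
  | nil s => exact FiringSeq.nil _
  | cons hf _ ih => exact FiringSeq.cons (hstep hf) ih

/-- `Sum.inr i : P ⊕ Fin (n+1)` is the place `p_{e_i}` and `Sum.inr i : T ⊕ Fin n` the
transition `t_{e_{i+1}}`. -/
theorem trace_workflow_projection_general {P T V O : Type} {n : ℕ}
    (W : DAWNet P T V O) (Wτ : DAWNet (P ⊕ Fin (n+1)) (T ⊕ Fin n) V O)
    (tr : Fin n → T)
    (hpreT : ∀ t : T, Wτ.pre (Sum.inl t) = Sum.inl '' W.pre t)
    (hpostT : ∀ t : T, Wτ.post (Sum.inl t) = Sum.inl '' W.post t)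
    (hwrT : ∀ t : T, Wτ.wr (Sum.inl t) = W.wr t)
    (hgdT : ∀ (t : T) (η : V → Option O), Wτ.gd (Sum.inl t) η ↔ W.gd t η)
    (hpreE : ∀ i : Fin n,
      Wτ.pre (Sum.inr i) = Sum.inl '' W.pre (tr i) ∪ {Sum.inr i.castSucc})
    (hpostE : ∀ i : Fin n,
      Wτ.post (Sum.inr i) = Sum.inl '' W.post (tr i) ∪ {Sum.inr i.succ})
    (hgdE : ∀ (i : Fin n) (η : V → Option O), Wτ.gd (Sum.inr i) η → W.gd (tr i) η)
    (hwrE : ∀ (i : Fin n) (v : V),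
      (Wτ.wr (Sum.inr i) v = none ↔ W.wr (tr i) v = none) ∧
      (∀ s s' : Set O, Wτ.wr (Sum.inr i) v = some s → W.wr (tr i) v = some s' →
        s ⊆ s' ∧ (s = ∅ ↔ s' = ∅)))
    (M0 : (P ⊕ Fin (n+1)) → ℕ) (η0 : V → Option O)
    (l : List ((T ⊕ Fin n) × ((P ⊕ Fin (n+1)) → ℕ) × (V → Option O)))
    (e : ((P ⊕ Fin (n+1)) → ℕ) × (V → Option O))
    (h : FiringSeq Wτ (M0, η0) l e) :
    FiringSeq W (projM M0, η0) (l.map (projStep tr)) (projM e.1, e.2) := by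
  have hinl : ∀ t, Wτ.TransitionRefines (Sum.inl t) W t Sum.inl := fun t =>
    { preimage_pre := by rw [hpreT, Set.preimage_image_eq _ Sum.inl_injective]
      preimage_post := by rw [hpostT, Set.preimage_image_eq _ Sum.inl_injective]
      gd_imp := fun η => (hgdT t η).mp
      wr_eq_none_iff := by simp [hwrT]
      wr_subset := fun v s s' hs hs' => by
        obtain rfl : s = s' := Option.some_injective _ ((hwrT t ▸ hs).symm.trans hs')
        exact ⟨subset_rfl, Iff.rfl⟩ }
  have hinr : ∀ i, Wτ.TransitionRefines (Sum.inr i) W (tr i) Sum.inl := fun i =>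
    { preimage_pre := by rw [hpreE, preimage_inl_image_union_inr]
      preimage_post := by rw [hpostE, preimage_inl_image_union_inr]
      gd_imp := hgdE i
      wr_eq_none_iff := fun v => (hwrE i v).1
      wr_subset := fun v => (hwrE i v).2 }
  have hrefines : ∀ t', Wτ.TransitionRefines t' W (Sum.elim id tr t') Sum.inl :=
    Sum.rec hinl hinr
  exact h.map (Sum.elim id tr) projM fun hf => (hrefines _).validFiring_comp hf

/-- The projection of a sequence of valid firings of the trace workflow `W^τ`
(starting from a state whose marking, restricted to the original places, puts a token
only in `start`) is a sequence of valid firings of the original workflow `W`.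
Here `Wτ` is the trace workflow for a trace with `n` events whose transitions are
`tr 0, …, tr (n-1)`: it has fresh places `p_{e_0}, …, p_{e_n}` (indexed by `Fin (n+1)`)
and fresh transitions `t_{e_1}, …, t_{e_n}` (indexed by `Fin n`, `Sum.inr i` standing
for `t_{e_{i+1}}`), mirroring `W` as described by the hypotheses. -/
theorem trace_workflow_projection {P T V O : Type} {n : ℕ}
    (W : DAWNet P T V O) (Wτ : DAWNet (P ⊕ Fin (n+1)) (T ⊕ Fin n) V O)
    (tr : Fin n → T) (start : P)
    (hpreT : ∀ t : T, Wτ.pre (Sum.inl t) = Sum.inl '' W.pre t)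
    (hpostT : ∀ t : T, Wτ.post (Sum.inl t) = Sum.inl '' W.post t)
    (hwrT : ∀ t : T, Wτ.wr (Sum.inl t) = W.wr t)
    (hgdT : ∀ (t : T) (η : V → Option O), Wτ.gd (Sum.inl t) η ↔ W.gd t η)
    (hpreE : ∀ i : Fin n,
      Wτ.pre (Sum.inr i) = Sum.inl '' W.pre (tr i) ∪ {Sum.inr i.castSucc})
    (hpostE : ∀ i : Fin n,
      Wτ.post (Sum.inr i) = Sum.inl '' W.post (tr i) ∪ {Sum.inr i.succ})
    (hgdE : ∀ (i : Fin n) (η : V → Option O), Wτ.gd (Sum.inr i) η → W.gd (tr i) η)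
    (hwrE : ∀ (i : Fin n) (v : V),
      (Wτ.wr (Sum.inr i) v = none ↔ W.wr (tr i) v = none) ∧
      (∀ s s' : Set O, Wτ.wr (Sum.inr i) v = some s → W.wr (tr i) v = some s' →
        s ⊆ s' ∧ (s = ∅ ↔ s' = ∅)))
    (M0 : (P ⊕ Fin (n+1)) → ℕ) (η0 : V → Option O)
    (hstart : M0 (Sum.inl start) = 1)
    (hrest : ∀ p : P, p ≠ start → M0 (Sum.inl p) = 0)
    (l : List ((T ⊕ Fin n) × ((P ⊕ Fin (n+1)) → ℕ) × (V → Option O)))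
    (e : ((P ⊕ Fin (n+1)) → ℕ) × (V → Option O))
    (h : FiringSeq Wτ (M0, η0) l e) :
    FiringSeq W (projM M0, η0) (l.map (projStep tr)) (projM e.1, e.2) :=
  trace_workflow_projection_general W Wτ tr hpreT hpostT hwrT hgdT hpreE hpostE hgdE hwrE M0 η0 l e
    h
end

section
/- In the trace workflow W^τ, the total number of tokens in the newly introduced places is bounded by the initial number of tokens in the start place: if C = (M_0,η_0) →t1 ... →tk (M_k,η_k) is a sequence of valid firings in W^τ whose initial marking has tokens only in start, then for all 0 ≤ i ≤ k, Σ_{p ∈ P^τ \ P} M_i(p) ≤ M_0(start). -/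
lemma step_bound {P Tτ V O : Type} {n : ℕ}
    (Wτ : DAWNet (P ⊕ Fin (n+1)) Tτ V O)
    (tn : Fin (n+1) → Tτ) (start : P)
    (htn : Function.Injective tn)
    (hprod : ∀ i : Fin (n+1), Sum.inr i ∈ Wτ.post (tn i))
    (huniq : ∀ (i : Fin (n+1)) (t : Tτ), Sum.inr i ∈ Wτ.post t → t = tn i)
    (hpre0 : Wτ.pre (tn 0) = {Sum.inl start})
    (hchain : ∀ i : Fin n, Sum.inr i.castSucc ∈ Wτ.pre (tn i.succ))
    (hstart : ∀ t : Tτ, Sum.inl start ∉ Wτ.post t)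
    {M M' : (P ⊕ Fin (n+1)) → ℕ} {η η' : V → Option O} {t : Tτ}
    (hf : ValidFiring Wτ M η t M' η') :
    M' (Sum.inl start) + ∑ i : Fin (n+1), M' (Sum.inr i) ≤
      M (Sum.inl start) + ∑ i : Fin (n+1), M (Sum.inr i) := by
  obtain ⟨hpos, -, hM, -, -⟩ := hf
  have hle : ∀ q, q ∉ Wτ.post t → M' q ≤ M q := by
    intro q hq
    obtain ⟨a, b, c⟩ := hM q
    by_cases hp : q ∈ Wτ.pre t
    · rw [a ⟨hp, hq⟩]; omega
    · rw [c (by tauto)]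
  have hgen : ∀ q, M' q ≤ M q + 1 := by
    intro q
    obtain ⟨a, b, c⟩ := hM q
    by_cases hp : q ∈ Wτ.pre t <;> by_cases hq : q ∈ Wτ.post t
    · rw [c (by tauto)]; omega
    · rw [a ⟨hp, hq⟩]; omega
    · rw [b ⟨hq, hp⟩]
    · rw [c (by tauto)]; omega
  by_cases hex : ∃ j, t = tn j
  · obtain ⟨j, rfl⟩ := hex
    by_cases hj : j = 0
    · subst hj
      have hs_pre : Sum.inl start ∈ Wτ.pre (tn 0) := by rw [hpre0]; rfl
      have hs : M' (Sum.inl start) = M (Sum.inl start) - 1 :=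
        (hM _).1 ⟨hs_pre, hstart _⟩
      have hposs : 0 < M (Sum.inl start) := hpos _ hs_pre
      have g0 : M' (Sum.inr (0 : Fin (n+1))) = M (Sum.inr 0) + 1 := by
        refine (hM _).2.1 ⟨hprod 0, ?_⟩
        rw [hpre0]; simp
      have gk : ∀ i : Fin (n+1), i ≠ 0 → M' (Sum.inr i) = M (Sum.inr i) := by
        intro i hi
        refine (hM _).2.2 ?_
        constructor
        · intro hmem; rw [hpre0] at hmem; simp at hmem
        · intro hmem
          exact (hi (htn (huniq i _ hmem).symm)).elim
      have e1 : ∑ i : Fin (n+1), M' (Sum.inr i) =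
          M' (Sum.inr 0) + ∑ i ∈ Finset.univ.erase 0, M' (Sum.inr i) :=
        (Finset.add_sum_erase _ _ (Finset.mem_univ 0)).symm
      have e2 : ∑ i : Fin (n+1), M (Sum.inr i) =
          M (Sum.inr 0) + ∑ i ∈ Finset.univ.erase 0, M (Sum.inr i) :=
        (Finset.add_sum_erase _ _ (Finset.mem_univ 0)).symm
      have e3 : ∑ i ∈ Finset.univ.erase (0 : Fin (n+1)), M' (Sum.inr i) =
          ∑ i ∈ Finset.univ.erase 0, M (Sum.inr i) :=
        Finset.sum_congr rfl fun i hi => gk i (Finset.ne_of_mem_erase hi)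
      omega
    · obtain ⟨i, rfl⟩ := Fin.eq_succ_of_ne_zero hj
      have hne : i.castSucc ≠ i.succ := (Fin.castSucc_lt_succ (i := i)).ne
      have hcs_np : Sum.inr i.castSucc ∉ Wτ.post (tn i.succ) := by
        intro hmem
        exact hne (htn (huniq _ _ hmem)).symm
      have gcs : M' (Sum.inr i.castSucc) = M (Sum.inr i.castSucc) - 1 :=
        (hM _).1 ⟨hchain i, hcs_np⟩
      have hposcs : 0 < M (Sum.inr i.castSucc) := hpos _ (hchain i)
      have gs : M' (Sum.inr i.succ) ≤ M (Sum.inr i.succ) + 1 := hgen _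
      have gk : ∀ k : Fin (n+1), k ≠ i.castSucc → k ≠ i.succ →
          M' (Sum.inr k) ≤ M (Sum.inr k) := by
        intro k h1 h2
        refine hle _ fun hmem => h2 ?_
        exact (htn (huniq _ _ hmem)).symm
      have hs : M' (Sum.inl start) ≤ M (Sum.inl start) := hle _ (hstart _)
      have hmem2 : i.succ ∈ Finset.univ.erase i.castSucc :=
        Finset.mem_erase.2 ⟨fun e => hne e.symm, Finset.mem_univ _⟩
      have e1a := Finset.add_sum_erase (Finset.univ.erase i.castSucc)
        (fun k => M' (Sum.inr k)) hmem2
      have e1b := Finset.add_sum_erase Finset.univ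
        (fun k => M' (Sum.inr k)) (Finset.mem_univ i.castSucc)
      have e2a := Finset.add_sum_erase (Finset.univ.erase i.castSucc)
        (fun k => M (Sum.inr k)) hmem2
      have e2b := Finset.add_sum_erase Finset.univ
        (fun k => M (Sum.inr k)) (Finset.mem_univ i.castSucc)
      have e3 : ∑ k ∈ (Finset.univ.erase i.castSucc).erase i.succ, M' (Sum.inr k) ≤
          ∑ k ∈ (Finset.univ.erase i.castSucc).erase i.succ, M (Sum.inr k) := by
        refine Finset.sum_le_sum fun k hk => ?_
        obtain ⟨h2, h1⟩ := Finset.mem_erase.1 hk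
        exact gk k (Finset.ne_of_mem_erase h1) h2
      omega
  · have h1 : M' (Sum.inl start) ≤ M (Sum.inl start) := hle _ (hstart _)
    have h2 : ∑ i : Fin (n+1), M' (Sum.inr i) ≤ ∑ i : Fin (n+1), M (Sum.inr i) :=
      Finset.sum_le_sum fun i _ => hle _ fun hmem => hex ⟨i, huniq i t hmem⟩
    omega

lemma seq_bound {P T V O : Type} (W : DAWNet P T V O)
    (F : (P → ℕ) → ℕ)
    (hF : ∀ {M η t M' η'}, ValidFiring W M η t M' η' → F M' ≤ F M)
    {s : (P → ℕ) × (V → Option O)} {l : List (T × (P → ℕ) × (V → Option O))}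
    {e : (P → ℕ) × (V → Option O)} (h : FiringSeq W s l e) :
    ∀ x ∈ s :: l.map (fun x => x.2), F x.1 ≤ F s.1 := by
  induction h with
  | nil s => intro x hx; simp at hx; subst hx; exact le_refl _
  | cons hf htail ih =>
    intro x hx
    simp only [List.map_cons, List.mem_cons] at hx
    rcases hx with rfl | hx
    · exact le_refl _
    · calc F x.1 ≤ F _ := ih x (by simpa using hx)
        _ ≤ _ := hF hf

/-- In the trace workflow `W^τ` (places `P ⊕ Fin (n+1)`, the new places being
`p_{e_0}, …, p_{e_n}`, with new transitions `tn 0 = start_t, tn 1 = t_{e_1}, …`),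
the total number of tokens in the newly introduced places is bounded, along any sequence
of valid firings whose initial marking has tokens only in `start`, by the initial number
of tokens in `start`.  The hypotheses state: each new place `p_{e_i}` is produced only by
`tn i` (and `tn i` produces into it); `tn 0` consumes exactly the token from `start`;
`tn (i+1)` consumes a token from `p_{e_i}`; `start` has no incoming arc. -/
theorem trace_workflow_new_places_token_bound {P Tτ V O : Type} {n : ℕ}
    (Wτ : DAWNet (P ⊕ Fin (n+1)) Tτ V O)
    (tn : Fin (n+1) → Tτ) (start : P)
    (htn : Function.Injective tn)
    (hprod : ∀ i : Fin (n+1), Sum.inr i ∈ Wτ.post (tn i))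
    (huniq : ∀ (i : Fin (n+1)) (t : Tτ), Sum.inr i ∈ Wτ.post t → t = tn i)
    (hpre0 : Wτ.pre (tn 0) = {Sum.inl start})
    (hchain : ∀ i : Fin n, Sum.inr i.castSucc ∈ Wτ.pre (tn i.succ))
    (hstart : ∀ t : Tτ, Sum.inl start ∉ Wτ.post t)
    (M0 : (P ⊕ Fin (n+1)) → ℕ) (η0 : V → Option O)
    (hz : ∀ q, q ≠ Sum.inl start → M0 q = 0)
    (l : List (Tτ × ((P ⊕ Fin (n+1)) → ℕ) × (V → Option O)))
    (e : ((P ⊕ Fin (n+1)) → ℕ) × (V → Option O))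
    (h : FiringSeq Wτ (M0, η0) l e) :
    ∀ s ∈ (M0, η0) :: l.map (fun x => x.2),
      (∑ i : Fin (n+1), s.1 (Sum.inr i)) ≤ M0 (Sum.inl start) := by
  intro s hs
  have key := seq_bound Wτ
    (fun M => M (Sum.inl start) + ∑ i : Fin (n+1), M (Sum.inr i))
    (fun hf => step_bound Wτ tn start htn hprod huniq hpre0 hchain hstart hf)
    h s hs
  simp only [] at key
  have hz0 : ∑ i : Fin (n+1), M0 (Sum.inr i) = 0 :=
    Finset.sum_eq_zero fun i _ => hz _ (by simp)
  have hle : (∑ i : Fin (n+1), s.1 (Sum.inr i)) ≤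
      s.1 (Sum.inl start) + ∑ i : Fin (n+1), s.1 (Sum.inr i) := Nat.le_add_left _ _
  omega
end

section
/- Sequential ordering of trace transitions: in the trace workflow W^τ, if a sequence of valid firings C contains a firing of transition t_{e_i} (1 ≤ i ≤ n), then C contains an earlier firing of transition t_{e_{i-1}}; moreover if the initial marking has exactly one token in start then each t_{e_i} occurs at most once in C. -/
/-!
Token counting on the new places. The place `p_{e_i}` starts empty, only `t_{e_i}` puts tokens
on it and every firing of `t_{e_{i+1}}` takes one off, so in every prefix of a run
`t_{e_{i+1}}` fires at most as often as `t_{e_i}`. A firing of `t_{e_{i+1}}` needs a token on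
`p_{e_i}`, so the prefix before it contains `t_{e_i}`. Likewise `start` is never refilled and
`t_{e_0}` consumes from it, so with one initial token `t_{e_0}` fires at most once, and the
inequality carries this bound along the chain.
-/

theorem List.eq_of_getElem_eq_of_count_le_one {α : Type*} [BEq α] [LawfulBEq α] {l : List α}
    {a : α} (h : l.count a ≤ 1) {i j : ℕ} {hi : i < l.length} {hj : j < l.length}
    (hia : l[i] = a) (hja : l[j] = a) : i = j := by
  wlog hij : i ≤ j generalizing i j
  · exact (this hja hia (by omega)).symm
  by_contra hne
  have hfront : 0 < (l.take j).count a :=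
    List.count_pos_iff.2 (List.mem_take_iff_getElem.2 ⟨i, by omega, hia⟩)
  have hback : 0 < (l.drop j).count a :=
    List.count_pos_iff.2 (by simp [List.drop_eq_getElem_cons hj, hja])
  have hsplit := List.count_append (a := a) (l₁ := l.take j) (l₂ := l.drop j)
  rw [List.take_append_drop] at hsplit
  omega

namespace ValidFiring

variable {P T V O : Type} {W : DAWNet P T V O} {M M' : P → ℕ} {η η' : V → Option O} {t : T}
  {q : P}

theorem apply_le_add_one (hv : ValidFiring W M η t M' η') (q : P) : M' q ≤ M q + 1 := by
  obtain ⟨hcons, hprod, hkeep⟩ := hv.2.2.1 q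
  by_cases hpre : q ∈ W.pre t <;> by_cases hpost : q ∈ W.post t
  · rw [hkeep (iff_of_true hpre hpost)]; omega
  · rw [hcons ⟨hpre, hpost⟩]; omega
  · rw [hprod ⟨hpost, hpre⟩]
  · rw [hkeep (iff_of_false hpre hpost)]; omega

theorem apply_le_of_notMem_post (hv : ValidFiring W M η t M' η') (hpost : q ∉ W.post t) :
    M' q ≤ M q := by
  obtain ⟨hcons, -, hkeep⟩ := hv.2.2.1 q
  by_cases hpre : q ∈ W.pre t
  · rw [hcons ⟨hpre, hpost⟩]; omega
  · rw [hkeep (iff_of_false hpre hpost)]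

theorem apply_add_one_eq (hv : ValidFiring W M η t M' η') (hpre : q ∈ W.pre t)
    (hpost : q ∉ W.post t) : M' q + 1 = M q := by
  rw [(hv.2.2.1 q).1 ⟨hpre, hpost⟩]
  have := hv.1 q hpre
  omega

end ValidFiring

namespace FiringSeq

variable {P T V O : Type} {W : DAWNet P T V O} {s e : (P → ℕ) × (V → Option O)}
  {l : List (T × (P → ℕ) × (V → Option O))}

theorem exists_of_append {l₁ l₂ : List (T × (P → ℕ) × (V → Option O))}
    (h : FiringSeq W s (l₁ ++ l₂) e) :
    ∃ s', FiringSeq W s l₁ s' ∧ FiringSeq W s' l₂ e := by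
  induction l₁ generalizing s with
  | nil => exact ⟨s, nil s, h⟩
  | cons x l₁ ih =>
    cases h with
    | cons hv hrest =>
      obtain ⟨s', h₁, h₂⟩ := ih hrest
      exact ⟨s', cons hv h₁, h₂⟩

theorem validFiring_of_cons {x : T × (P → ℕ) × (V → Option O)}
    (h : FiringSeq W s (x :: l) e) :
    ValidFiring W s.1 s.2 x.1 x.2.1 x.2.2 := by
  cases h with
  | cons hv _ => exact hv

theorem exists_validFiring_getElem (h : FiringSeq W s l e) {m : ℕ} (hm : m < l.length) :
    ∃ s', FiringSeq W s (l.take m) s' ∧ ValidFiring W s'.1 s'.2 l[m].1 l[m].2.1 l[m].2.2 := by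
  rw [← List.take_append_drop m l, List.drop_eq_getElem_cons hm] at h
  obtain ⟨s', hprefix, hrest⟩ := h.exists_of_append
  exact ⟨s', hprefix, hrest.validFiring_of_cons⟩

theorem apply_add_count_le [DecidableEq T] {q : P} {b : T} (hpre : q ∈ W.pre b)
    (hpost : q ∉ W.post b) (producer : T → Bool)
    (hproducer : ∀ t, q ∈ W.post t → producer t)
    (h : FiringSeq W s l e) :
    e.1 q + (l.map Prod.fst).count b ≤ s.1 q + (l.map Prod.fst).countP producer := by
  induction h with
  | nil => simp
  | @cons s t M' η' l e hv _ ih =>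
    have hstep : M' q + (if t = b then 1 else 0) ≤ s.1 q + (if producer t then 1 else 0) := by
      by_cases htb : t = b
      · subst htb
        have := hv.apply_add_one_eq hpre hpost
        split <;> omega
      · by_cases ht : producer t
        · have := hv.apply_le_add_one q
          simp only [htb, ht, if_false, if_true]
          omega
        · simp only [htb, ht, if_false]
          exact hv.apply_le_of_notMem_post fun hq => ht (hproducer t hq)
    simp only [List.map_cons, List.count_cons, List.countP_cons, beq_iff_eq] at ih ⊢
    omega

theorem exists_lt_getElem_fst_eq {q : P} {a b : T} (h : FiringSeq W s l e) (hq : s.1 q = 0)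
    (hpre : q ∈ W.pre b) (hpost : q ∉ W.post b) (hproducer : ∀ t, q ∈ W.post t → t = a)
    {m : ℕ} (hm : m < l.length) (hbm : l[m].1 = b) :
    ∃ r, ∃ hr : r < m, (l[r]'(hr.trans hm)).1 = a := by
  classical
  obtain ⟨s', hprefix, hv⟩ := h.exists_validFiring_getElem hm
  have hmarked : 0 < s'.1 q := hv.1 q (hbm ▸ hpre)
  have hbalance := hprefix.apply_add_count_le hpre hpost (· == a) (by simpa using hproducer)
  have hfired : a ∈ (l.take m).map Prod.fst := by
    rw [← List.count_pos_iff, List.count_eq_countP]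
    omega
  obtain ⟨_, hx, rfl⟩ := List.mem_map.1 hfired
  obtain ⟨r, hr, rfl⟩ := List.mem_take_iff_getElem.1 hx
  exact ⟨r, by omega, rfl⟩

end FiringSeq

theorem trace_transitions_sequential_general {P Tτ V O : Type} {n : ℕ}
    (Wτ : DAWNet (P ⊕ Fin (n+1)) Tτ V O)
    (tn : Fin (n+1) → Tτ) (start : P)
    (htn : Function.Injective tn)
    (huniq : ∀ (i : Fin (n+1)) (t : Tτ), Sum.inr i ∈ Wτ.post t → t = tn i)
    (hpre0 : Wτ.pre (tn 0) = {Sum.inl start})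
    (hchain : ∀ i : Fin n, Sum.inr i.castSucc ∈ Wτ.pre (tn i.succ))
    (hstart : ∀ t : Tτ, Sum.inl start ∉ Wτ.post t)
    (M0 : (P ⊕ Fin (n+1)) → ℕ) (η0 : V → Option O)
    (hz : ∀ q, q ≠ Sum.inl start → M0 q = 0)
    (l : List (Tτ × ((P ⊕ Fin (n+1)) → ℕ) × (V → Option O)))
    (e : ((P ⊕ Fin (n+1)) → ℕ) × (V → Option O))
    (h : FiringSeq Wτ (M0, η0) l e) :
    (∀ (i : Fin n) (m : Fin l.length), (l.get m).1 = tn i.succ →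
      ∃ r : Fin l.length, (r : ℕ) < (m : ℕ) ∧ (l.get r).1 = tn i.castSucc) ∧
    (M0 (Sum.inl start) = 1 →
      ∀ (i : Fin (n+1)) (m m' : Fin l.length),
        (l.get m).1 = tn i → (l.get m').1 = tn i → m = m') := by
  classical
  have hnot_post : ∀ i : Fin n, Sum.inr i.castSucc ∉ Wτ.post (tn i.succ) := fun i hp =>
    (Fin.castSucc_lt_succ (i := i)).ne (htn (huniq _ _ hp)).symm
  have hempty : ∀ i : Fin n, M0 (Sum.inr i.castSucc) = 0 := fun i => hz _ Sum.inr_ne_inl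
  refine ⟨fun i m hm => ?_, fun hM1 i m m' hm hm' => ?_⟩
  · obtain ⟨r, hr, hra⟩ := h.exists_lt_getElem_fst_eq (hempty i) (hchain i) (hnot_post i)
      (huniq _) m.2 hm
    exact ⟨⟨r, hr.trans m.2⟩, hr, hra⟩
  · have hcount : ∀ i : Fin (n+1), (l.map Prod.fst).count (tn i) ≤ 1 := by
      intro i
      induction i using Fin.induction with
      | zero =>
        have := h.apply_add_count_le (b := tn 0) (by simp [hpre0]) (hstart _)
          (fun _ => false) fun t ht => absurd ht (hstart t)
        simp only [List.countP_false, Function.const_apply, hM1] at this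
        omega
      | succ i ih =>
        have := h.apply_add_count_le (hchain i) (hnot_post i) (· == tn i.castSucc)
          (by simpa using huniq _)
        rw [← List.count_eq_countP] at this
        simp only [hempty] at this
        omega
    exact Fin.ext <| List.eq_of_getElem_eq_of_count_le_one (hcount i) (hi := by simp)
      (hj := by simp) (by simpa using hm) (by simpa using hm')

/-- Sequential ordering of trace transitions in the trace workflow `W^τ`
(new places `p_{e_0}, …, p_{e_n}` indexed by `Fin (n+1)`, new transitions
`tn 0 = start_t = t_{e_0}, tn 1 = t_{e_1}, …, tn n = t_{e_n}`): if a sequence of valid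
firings contains a firing of `t_{e_i}` (1 ≤ i ≤ n) then it contains an earlier firing of
`t_{e_{i-1}}`; moreover, if the initial marking has exactly one token in `start` then
each `t_{e_i}` occurs at most once. -/
theorem trace_transitions_sequential {P Tτ V O : Type} {n : ℕ}
    (Wτ : DAWNet (P ⊕ Fin (n+1)) Tτ V O)
    (tn : Fin (n+1) → Tτ) (start : P)
    (htn : Function.Injective tn)
    (hprod : ∀ i : Fin (n+1), Sum.inr i ∈ Wτ.post (tn i))
    (huniq : ∀ (i : Fin (n+1)) (t : Tτ), Sum.inr i ∈ Wτ.post t → t = tn i)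
    (hpre0 : Wτ.pre (tn 0) = {Sum.inl start})
    (hchain : ∀ i : Fin n, Sum.inr i.castSucc ∈ Wτ.pre (tn i.succ))
    (hout : ∀ (i : Fin n) (t : Tτ), Sum.inr i.castSucc ∈ Wτ.pre t → t = tn i.succ)
    (hstart : ∀ t : Tτ, Sum.inl start ∉ Wτ.post t)
    (M0 : (P ⊕ Fin (n+1)) → ℕ) (η0 : V → Option O)
    (hz : ∀ q, q ≠ Sum.inl start → M0 q = 0)
    (l : List (Tτ × ((P ⊕ Fin (n+1)) → ℕ) × (V → Option O)))
    (e : ((P ⊕ Fin (n+1)) → ℕ) × (V → Option O))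
    (h : FiringSeq Wτ (M0, η0) l e) :
    (∀ (i : Fin n) (m : Fin l.length), (l.get m).1 = tn i.succ →
      ∃ r : Fin l.length, (r : ℕ) < (m : ℕ) ∧ (l.get r).1 = tn i.castSucc) ∧
    (M0 (Sum.inl start) = 1 →
      ∀ (i : Fin (n+1)) (m m' : Fin l.length),
        (l.get m).1 = tn i → (l.get m').1 = tn i → m = m') :=
  trace_transitions_sequential_general Wτ tn start htn huniq hpre0 hchain hstart M0 η0 hz l e h
end

section
/- Correctness of the trace-workflow projection with respect to compliance: if C is a sequence of valid firings in W^τ with M_0(start) = 1, and ℓ is the maximum index i such that t_{e_i} occurs in C (with ℓ = 0 if none occurs), then the prefix trace τ' = (e_1,...,e_ℓ) is compliant with the projected sequence Π_τ(C) in W. -/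
/-- A trace of `m` events is compliant with a sequence of valid firings `l` if there is
an order-preserving injective mapping `γ` from event indices to firing indices such that
the firing at `γ i` uses the event's transition and its resulting assignment is
consistent with the event's data (each event `ev i` consists of a transition `(ev i).1`
and a data-consistency predicate `(ev i).2` on assignments). -/
def Compliant {P T V O : Type} {m : ℕ} (ev : Fin m → T × ((V → Option O) → Prop))
    (l : List (T × (P → ℕ) × (V → Option O))) : Prop :=
  ∃ γ : Fin m → Fin l.length, StrictMono γ ∧
    ∀ i : Fin m, (l.get (γ i)).1 = (ev i).1 ∧ (ev i).2 (l.get (γ i)).2.2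

lemma firing_at {P T V O : Type} {W : DAWNet P T V O}
    {s e : (P → ℕ) × (V → Option O)} {l : List (T × (P → ℕ) × (V → Option O))}
    (h : FiringSeq W s l e) :
    ∀ k (hk : k < l.length), ∃ M η, ValidFiring W M η (l.get ⟨k, hk⟩).1
      (l.get ⟨k, hk⟩).2.1 (l.get ⟨k, hk⟩).2.2 := by
  induction h with
  | nil _ => intro k hk; simp at hk
  | cons hf htail ih =>
    intro k hk
    cases k with
    | zero => exact ⟨_, _, hf⟩
    | succ k => exact ih k (by simpa using hk)

lemma chain {P T V O : Type} {n : ℕ} {W : DAWNet P T V O}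
    {Wτ : DAWNet (P ⊕ Fin n) (T ⊕ Fin n) V O}
    (ev : Fin n → T × ((V → Option O) → Prop))
    (hpostT : ∀ t : T, Wτ.post (Sum.inl t) = Sum.inl '' W.post t)
    (hpreE : ∀ i : Fin n, Wτ.pre (Sum.inr i) =
      Sum.inl '' W.pre (ev i).1 ∪ {q | ∃ j : Fin n, (j : ℕ) + 1 = (i : ℕ) ∧ q = Sum.inr j})
    (hpostE : ∀ i : Fin n, Wτ.post (Sum.inr i) = Sum.inl '' W.post (ev i).1 ∪ {Sum.inr i})
    {s e : ((P ⊕ Fin n) → ℕ) × (V → Option O)}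
    {l : List ((T ⊕ Fin n) × ((P ⊕ Fin n) → ℕ) × (V → Option O))}
    (h : FiringSeq Wτ s l e) :
    ∀ (F : Fin n → Prop), (∀ j : Fin n, 0 < s.1 (Sum.inr j) → F j) →
      ∀ k (hk : k < l.length) (i j : Fin n), (l.get ⟨k, hk⟩).1 = Sum.inr i →
        (j : ℕ) + 1 = (i : ℕ) →
        F j ∨ ∃ k', k' < k ∧ ∃ hk' : k' < l.length, (l.get ⟨k', hk'⟩).1 = Sum.inr j := by
  induction h with
  | nil _ => intro F hs k hk; simp at hk
  | cons hf htail ih =>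
    rename_i s t M' η' l e
    intro F hs k hk i j hget hji
    cases k with
    | zero =>
      left
      simp only [List.get] at hget
      subst hget
      apply hs
      apply hf.1
      rw [hpreE]
      exact Or.inr ⟨j, hji, rfl⟩
    | succ k =>
      have notpost : ∀ j' : Fin n, t ≠ Sum.inr j' → Sum.inr j' ∉ Wτ.post t := by
        intro j' htj' hmem
        cases t with
        | inl t' =>
          rw [hpostT] at hmem
          obtain ⟨p, -, hp⟩ := hmem
          exact (Sum.inl_ne_inr hp).elim
        | inr i' =>
          rw [hpostE] at hmem
          rcases hmem with ⟨p, -, hp⟩ | hp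
          · exact (Sum.inl_ne_inr hp).elim
          · have hji' : j' = i' := by simpa using Set.mem_singleton_iff.mp hp
            exact htj' (by rw [hji'])
      have hs' : ∀ j' : Fin n, 0 < M' (Sum.inr j') → (F j' ∨ t = Sum.inr j') := by
        intro j' hM'
        by_cases htj' : t = Sum.inr j'
        · exact Or.inr htj'
        · left
          apply hs
          have np := notpost j' htj'
          obtain ⟨h1, h2, h3⟩ := hf.2.2.1 (Sum.inr j')
          by_cases hp : Sum.inr j' ∈ Wτ.pre t
          · have := h1 ⟨hp, np⟩; omega
          · have := h3 (by tauto); omega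
      have := ih (fun j' => F j' ∨ t = Sum.inr j') hs' k (by simpa using hk) i j
        (by simpa using hget) hji
      rcases this with (hF | ht) | ⟨k', hk'k, hk'l, hget'⟩
      · exact Or.inl hF
      · exact Or.inr ⟨0, Nat.succ_pos _, by simpa using hk, by simpa using ht⟩
      · exact Or.inr ⟨k' + 1, by omega, by simpa using hk'l, by simpa using hget'⟩

/-- Correctness of the trace-workflow projection with respect to compliance.
`Wτ` is the trace workflow for a trace of `n` events `ev` over the DAW-net `W`:
it has fresh chained places (`Fin n`) and fresh transitions `t_{e_1}, …, t_{e_n}`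
(`Sum.inr i` standing for `t_{e_{i+1}}`), as described by the hypotheses; in particular
the guard of `t_{e_i}` restricts the guard of the mirrored transition and (`hdata`)
every firing of `t_{e_i}` results in an assignment consistent with the event's data.
If `C` is a sequence of valid firings of `Wτ` from the initial state (one token in
`start`, no token elsewhere) and `ℓ` is the maximal index such that `t_{e_ℓ}` occurs in
`C` (`ℓ = 0` if none occurs), then the prefix trace `(e_1, …, e_ℓ)` is compliant with
the projected sequence `Π_τ(C)` in `W`. -/
theorem trace_workflow_correctness {P T V O : Type} {n : ℕ}
    (W : DAWNet P T V O) (Wτ : DAWNet (P ⊕ Fin n) (T ⊕ Fin n) V O)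
    (ev : Fin n → T × ((V → Option O) → Prop)) (start : P)
    (hpreT : ∀ t : T, Wτ.pre (Sum.inl t) = Sum.inl '' W.pre t)
    (hpostT : ∀ t : T, Wτ.post (Sum.inl t) = Sum.inl '' W.post t)
    (hwrT : ∀ t : T, Wτ.wr (Sum.inl t) = W.wr t)
    (hgdT : ∀ (t : T) (η : V → Option O), Wτ.gd (Sum.inl t) η ↔ W.gd t η)
    (hpreE : ∀ i : Fin n, Wτ.pre (Sum.inr i) =
      Sum.inl '' W.pre (ev i).1 ∪ {q | ∃ j : Fin n, (j : ℕ) + 1 = (i : ℕ) ∧ q = Sum.inr j})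
    (hpostE : ∀ i : Fin n, Wτ.post (Sum.inr i) = Sum.inl '' W.post (ev i).1 ∪ {Sum.inr i})
    (hgdE : ∀ (i : Fin n) (η : V → Option O), Wτ.gd (Sum.inr i) η → W.gd (ev i).1 η)
    (hwrE : ∀ (i : Fin n) (v : V),
      (Wτ.wr (Sum.inr i) v = none ↔ W.wr (ev i).1 v = none) ∧
      (∀ s s' : Set O, Wτ.wr (Sum.inr i) v = some s → W.wr (ev i).1 v = some s' →
        s ⊆ s' ∧ (s = ∅ ↔ s' = ∅)))
    (hdata : ∀ (i : Fin n) (M : (P ⊕ Fin n) → ℕ) (η : V → Option O)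
        (M' : (P ⊕ Fin n) → ℕ) (η' : V → Option O),
      ValidFiring Wτ M η (Sum.inr i) M' η' → (ev i).2 η')
    (M0 : (P ⊕ Fin n) → ℕ) (η0 : V → Option O)
    (hstart : M0 (Sum.inl start) = 1)
    (hz : ∀ q, q ≠ Sum.inl start → M0 q = 0)
    (l : List ((T ⊕ Fin n) × ((P ⊕ Fin n) → ℕ) × (V → Option O)))
    (e : ((P ⊕ Fin n) → ℕ) × (V → Option O))
    (h : FiringSeq Wτ (M0, η0) l e)
    (ℓ : ℕ) (hℓn : ℓ ≤ n)
    (hub : ∀ i : Fin n, (∃ x ∈ l, x.1 = Sum.inr i) → (i : ℕ) < ℓ)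
    (hwit : 0 < ℓ → ∃ i : Fin n, (∃ x ∈ l, x.1 = Sum.inr i) ∧ (i : ℕ) + 1 = ℓ) :
    Compliant (fun i : Fin ℓ => ev (Fin.castLE hℓn i))
      (l.map fun x =>
        (Sum.elim id (fun i => (ev i).1) x.1, fun p => x.2.1 (Sum.inl p), x.2.2)) := by
  classical
  set g : ((T ⊕ Fin n) × ((P ⊕ Fin n) → ℕ) × (V → Option O)) →
      (T × (P → ℕ) × (V → Option O)) :=
    fun x => (Sum.elim id (fun i => (ev i).1) x.1, fun p => x.2.1 (Sum.inl p), x.2.2)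
    with hg
  -- the occurrence predicate
  set occ : Fin n → ℕ → Prop :=
    fun i k => ∃ hk : k < l.length, (l.get ⟨k, hk⟩).1 = Sum.inr i with hocc
  have hz0 : ∀ j : Fin n, 0 < (M0, η0).1 (Sum.inr j) → False := by
    intro j hj
    have h2 : (M0, η0).1 (Sum.inr j) = 0 := hz (Sum.inr j) (by simp)
    omega
  have chainF := chain ev hpostT hpreE hpostE h (fun _ => False) hz0
  have chain' : ∀ (k : ℕ) (hk : k < l.length) (i j : Fin n),
      (l.get ⟨k, hk⟩).1 = Sum.inr i → (j : ℕ) + 1 = (i : ℕ) →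
      ∃ k', k' < k ∧ occ j k' := by
    intro k hk i j hget hji
    rcases chainF k hk i j hget hji with hF | ⟨k', hk'k, hk'l, hget'⟩
    · exact hF.elim
    · exact ⟨k', hk'k, hk'l, hget'⟩
  have occAll : ∀ d : ℕ, ∀ i : Fin n, (i : ℕ) + d + 1 = ℓ → ∃ k, occ i k := by
    intro d
    induction d with
    | zero =>
      intro i hi
      obtain ⟨i0, ⟨x, hxl, hx1⟩, hi0⟩ := hwit (by omega)
      have : i = i0 := Fin.ext (by omega)
      subst this
      obtain ⟨k, hky⟩ := List.mem_iff_get.mp hxl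
      exact ⟨k, k.2, by rw [hky]; exact hx1⟩
    | succ d ih =>
      intro i hi
      have hi1n : (i : ℕ) + 1 < n := by omega
      set i' : Fin n := ⟨(i : ℕ) + 1, hi1n⟩ with hi'
      obtain ⟨k, hk, hget⟩ := ih i' (by simp [hi']; omega)
      obtain ⟨k', _, hocc'⟩ := chain' k hk i' i hget (by simp [hi'])
      exact ⟨k', hocc'⟩
  have occE : ∀ i : Fin ℓ, ∃ k, occ (Fin.castLE hℓn i) k := by
    intro i
    exact occAll (ℓ - 1 - (i : ℕ)) (Fin.castLE hℓn i) (by have := i.2; simp; omega)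
  set f : Fin ℓ → ℕ := fun i => Nat.find (occE i) with hf
  have fspec : ∀ i : Fin ℓ, occ (Fin.castLE hℓn i) (f i) := fun i => Nat.find_spec (occE i)
  have fmin : ∀ (i : Fin ℓ) (k : ℕ), occ (Fin.castLE hℓn i) k → f i ≤ k :=
    fun i k hk => Nat.find_min' (occE i) hk
  have flt : ∀ i : Fin ℓ, f i < l.length := fun i => (fspec i).1
  have fget : ∀ i : Fin ℓ, (l.get ⟨f i, flt i⟩).1 = Sum.inr (Fin.castLE hℓn i) :=
    fun i => (fspec i).2
  have fmono : StrictMono f := by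
    cases ℓ with
    | zero => intro a; exact a.elim0
    | succ m =>
      rw [Fin.strictMono_iff_lt_succ]
      intro i
      obtain ⟨k', hk'lt, hocc'⟩ := chain' (f i.succ) (flt i.succ)
        (Fin.castLE hℓn i.succ) (Fin.castLE hℓn i.castSucc) (fget i.succ) (by simp)
      have := fmin i.castSucc k' hocc'
      omega
  refine ⟨fun i => ⟨f i, by rw [List.length_map]; exact flt i⟩, ?_, ?_⟩
  · intro a b hab
    exact Fin.mk_lt_mk.mpr (fmono hab)
  · intro i
    have hmap : (l.map g).get ⟨f i, by rw [List.length_map]; exact flt i⟩ =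
        g (l.get ⟨f i, flt i⟩) := by
      simp [List.getElem_map]
    rw [hmap]
    constructor
    · show (Sum.elim id (fun j => (ev j).1) (l.get ⟨f i, flt i⟩).1) = _
      rw [fget i]; rfl
    · obtain ⟨M, η, hv⟩ := firing_at h (f i) (flt i)
      rw [fget i] at hv
      exact hdata _ _ _ _ _ hv
end

section
/- Cases of the trace workflow exactly characterize compliant cases of the original workflow: a case C (a sequence of valid firings from the initial state to a final state) of W^τ exists with projection Π_τ(C) if and only if Π_τ(C) is a case of W with which the full trace τ is compliant; conversely, for every case C of W with which τ is compliant there is a case C' of W^τ with Π_τ(C') = C. -/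
/-- A final state of `W` : one token in `sink`, no tokens elsewhere. -/
def FinalW {P : Type} (sink : P) (M : P → ℕ) : Prop :=
  M sink = 1 ∧ ∀ p, p ≠ sink → M p = 0

/-- A final state of the trace workflow `Wτ` : one token in `sink`, no tokens in the
other original places, the chain completed (all chain places empty except the last one,
which holds the token witnessing that `t_{e_n}` has fired). -/
def FinalWτ {P : Type} {n : ℕ} (sink : P) (M : (P ⊕ Fin n) → ℕ) : Prop :=
  M (Sum.inl sink) = 1 ∧ (∀ p : P, p ≠ sink → M (Sum.inl p) = 0) ∧
  ∀ j : Fin n, ((j : ℕ) + 1 < n → M (Sum.inr j) = 0) ∧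
               ((j : ℕ) + 1 = n → M (Sum.inr j) = 1)

/-!
Projecting a firing of `Wτ` forgets the chain places and renames the injected transition of
event `i` to the original transition of that event; firings project to firings because the
injected transitions only strengthen guards and shrink write sets. Compliance comes from the
chain: the chain place of event `i` is filled only by the transition of event `i` and is needed
by that of event `i + 1`. Hence in a case of `Wτ`, which ends with the last chain place marked,
every injected transition fires, and the first firing of the one of event `i` precedes the first
firing of the one of event `i + 1`; these first firings witness compliance. Conversely, a
compliant case of `W` is replayed in `Wτ`, firing the injected transition in place of each step
matched to an event and passing the chain token along.
-/

section

variable {P T V O : Type}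

namespace ValidFiring

theorem le_of_notMem_post {N : DAWNet P T V O} {M M' : P → ℕ} {η η' : V → Option O} {t : T}
    (h : ValidFiring N M η t M' η') {p : P} (hp : p ∉ N.post t) : M' p ≤ M p := by
  obtain ⟨-, -, hM, -, -⟩ := h
  by_cases hpre : p ∈ N.pre t
  · rw [(hM p).1 ⟨hpre, hp⟩]
    omega
  · rw [(hM p).2.2 (iff_of_false hpre hp)]

theorem comap {P' T' : Type} {N : DAWNet P T V O} {N' : DAWNet P' T' V O} {f : P → P'}
    {M M' : P' → ℕ} {η η' : V → Option O} {t : T} {t' : T'}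
    (h : ValidFiring N' M η t' M' η')
    (hpre : ∀ p, f p ∈ N'.pre t' ↔ p ∈ N.pre t) (hpost : ∀ p, f p ∈ N'.post t' ↔ p ∈ N.post t)
    (hgd : N'.gd t' η → N.gd t η)
    (hwr : ∀ v, (N'.wr t' v = none ↔ N.wr t v = none) ∧
      ∀ s s' : Set O, N'.wr t' v = some s → N.wr t v = some s' → s ⊆ s' ∧ (s = ∅ ↔ s' = ∅)) :
    ValidFiring N (M ∘ f) η t (M' ∘ f) η' := by
  obtain ⟨hpos, hg, hM, hw, hwn⟩ := h
  refine ⟨fun p hp => hpos _ ((hpre p).2 hp), hgd hg, fun p => ?_, fun v s' hs' => ?_,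
    fun v hv => hwn v ((hwr v).1.2 hv)⟩
  · simpa only [Function.comp_apply, hpre, hpost] using hM (f p)
  · obtain ⟨s, hs⟩ := Option.ne_none_iff_exists'.1 fun h0 => by simp [(hwr v).1.1 h0] at hs'
    obtain ⟨hsub, hemp⟩ := (hwr v).2 s s' hs hs'
    obtain ⟨hempty, hnonempty⟩ := hw v s hs
    refine ⟨fun h0 => hempty (hemp.2 h0), fun hne' => ?_⟩
    obtain ⟨o, ho, hvo⟩ :=
      hnonempty (Set.nonempty_iff_ne_empty.2 fun h0 => hne'.ne_empty (hemp.1 h0))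
    exact ⟨o, hsub ho, hvo⟩

end ValidFiring

namespace FiringSeq

variable {N : DAWNet P T V O} {s e : (P → ℕ) × (V → Option O)}
  {l : List (T × (P → ℕ) × (V → Option O))}

theorem exists_validFiring_getElem_s13 (h : FiringSeq N s l e) {q : ℕ} (hq : q < l.length) :
    ∃ M η, ValidFiring N M η l[q].1 l[q].2.1 l[q].2.2 := by
  induction h generalizing q with
  | nil => simp at hq
  | @cons s _ _ _ _ _ hv _ ih =>
    cases q with
    | zero => exact ⟨s.1, s.2, hv⟩
    | succ q => exact ih (by simpa using hq)

theorem exists_fired_of_pos {p : P} {t : T} (hprod : ∀ t', p ∈ N.post t' → t' = t)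
    (h : FiringSeq N s l e) (h0 : s.1 p = 0) (hpos : 0 < e.1 p) :
    ∃ k, ∃ hk : k < l.length, l[k].1 = t := by
  induction h with
  | nil => omega
  | @cons s t' _ _ _ _ hv _ ih =>
    by_cases ht : t' = t
    · exact ⟨0, by simp, ht⟩
    · have := hv.le_of_notMem_post (mt (hprod t') ht)
      obtain ⟨k, hk, hkt⟩ := ih (Nat.eq_zero_of_le_zero (h0 ▸ this)) hpos
      exact ⟨k + 1, by simpa using hk, hkt⟩

theorem exists_fired_before_of_mem_pre {p : P} {t : T} (hprod : ∀ t', p ∈ N.post t' → t' = t)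
    (h : FiringSeq N s l e) (h0 : s.1 p = 0) {q : ℕ} (hq : q < l.length)
    (hpre : p ∈ N.pre l[q].1) : ∃ k < q, ∃ hk : k < l.length, l[k].1 = t := by
  induction h generalizing q with
  | nil => simp at hq
  | @cons s t' _ _ _ _ hv _ ih =>
    cases q with
    | zero => exact absurd (hv.1 p hpre) (by omega)
    | succ q =>
      by_cases ht : t' = t
      · exact ⟨0, by omega, by simp, ht⟩
      · have := hv.le_of_notMem_post (mt (hprod t') ht)
        obtain ⟨k, hkq, hk, hkt⟩ := ih (Nat.eq_zero_of_le_zero (h0 ▸ this)) (by simpa using hq) hpre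
        exact ⟨k + 1, by omega, by simpa using hk, hkt⟩

end FiringSeq

theorem Fin.strictMono_of_lt_of_val_add_one_eq {α : Type*} [Preorder α] {n : ℕ} {f : Fin n → α}
    (h : ∀ i j : Fin n, (i : ℕ) + 1 = j → f i < f j) : StrictMono f := by
  cases n with
  | zero => exact fun i => i.elim0
  | succ n => exact Fin.strictMono_iff_lt_succ.2 fun i => h _ _ (by simp)

theorem Fin.forall_of_reverse_step {n : ℕ} {p : Fin n → Prop}
    (hlast : ∀ i : Fin n, (i : ℕ) + 1 = n → p i)
    (hsucc : ∀ i j : Fin n, (i : ℕ) + 1 = j → p j → p i) (i : Fin n) : p i := by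
  cases n with
  | zero => exact i.elim0
  | succ n =>
    exact Fin.reverseInduction (hlast _ (by simp)) (fun j hj => hsucc _ _ (by simp) hj) i

def CompliantFrom {n : ℕ} (ev : Fin n → T × ((V → Option O) → Prop))
    (l : List (T × (P → ℕ) × (V → Option O))) (k : ℕ) : Prop :=
  ∃ γ : Fin n → ℕ, (∀ i j : Fin n, k ≤ (i : ℕ) → i < j → γ i < γ j) ∧
    ∀ i : Fin n, k ≤ (i : ℕ) → ∃ h : γ i < l.length, l[γ i].1 = (ev i).1 ∧ (ev i).2 l[γ i].2.2

namespace CompliantFrom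

variable {n : ℕ} {ev : Fin n → T × ((V → Option O) → Prop)}
  {l : List (T × (P → ℕ) × (V → Option O))} {k : ℕ}

theorem of_compliant (h : Compliant ev l) : CompliantFrom ev l 0 := by
  obtain ⟨γ, hmono, hγ⟩ := h
  exact ⟨fun i => γ i, fun i j _ hij => hmono hij, fun i _ => ⟨(γ i).isLt, hγ i⟩⟩

theorem le_of_nil (h : CompliantFrom ev ([] : List (T × (P → ℕ) × (V → Option O))) k) : n ≤ k := by
  by_contra! hk
  obtain ⟨γ, -, hγ⟩ := h
  obtain ⟨hlt, -⟩ := hγ ⟨k, hk⟩ le_rfl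
  exact Nat.not_lt_zero _ hlt

theorem of_cons {x : T × (P → ℕ) × (V → Option O)} (h : CompliantFrom ev (x :: l) k) :
    (∃ hk : k < n, x.1 = (ev ⟨k, hk⟩).1 ∧ (ev ⟨k, hk⟩).2 x.2.2 ∧ CompliantFrom ev l (k + 1)) ∨
      CompliantFrom ev l k := by
  obtain ⟨γ, hmono, hγ⟩ := h
  have hshift (k' : ℕ) (hk' : k ≤ k') (hpos : ∀ i : Fin n, k' ≤ (i : ℕ) → 0 < γ i) :
      CompliantFrom ev l k' := by
    refine ⟨fun i => γ i - 1, fun i j hi hij => ?_, fun i hi => ?_⟩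
    · have := hmono i j (hk'.trans hi) hij
      have := hpos i hi
      dsimp only
      omega
    · obtain ⟨hlt, hγi⟩ := hγ i (hk'.trans hi)
      have := hpos i hi
      obtain ⟨q, hq⟩ := Nat.exists_eq_add_one_of_ne_zero this.ne'
      simp only [hq, List.getElem_cons_succ] at hγi
      refine ⟨?_, by simpa [hq] using hγi⟩
      simp only [List.length_cons, hq] at hlt ⊢
      omega
  by_cases hfirst : ∃ hk : k < n, γ ⟨k, hk⟩ = 0
  · obtain ⟨hk, h0⟩ := hfirst
    obtain ⟨_, hγk⟩ := hγ ⟨k, hk⟩ le_rfl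
    simp only [h0, List.getElem_cons_zero] at hγk
    refine .inl ⟨hk, hγk.1, hγk.2, hshift (k + 1) k.le_succ fun i hi => ?_⟩
    exact h0 ▸ hmono ⟨k, hk⟩ i le_rfl (Fin.lt_def.2 hi)
  · push Not at hfirst
    refine .inr (hshift k le_rfl fun i hi => ?_)
    obtain rfl | hlt := eq_or_lt_of_le hi
    · exact Nat.pos_of_ne_zero (hfirst i.isLt)
    · exact (Nat.zero_le _).trans_lt (hmono ⟨k, hlt.trans i.isLt⟩ i le_rfl hlt)

end CompliantFrom

/-- The chain place `.inr i` is filled by the injected transition `.inr i` of event `i` and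
consumed by that of event `i + 1`. -/
structure IsTraceNet {n : ℕ} (W : DAWNet P T V O) (Wτ : DAWNet (P ⊕ Fin n) (T ⊕ Fin n) V O)
    (ev : Fin n → T × ((V → Option O) → Prop)) : Prop where
  pre_inl : ∀ t : T, Wτ.pre (.inl t) = .inl '' W.pre t
  post_inl : ∀ t : T, Wτ.post (.inl t) = .inl '' W.post t
  wr_inl : ∀ t : T, Wτ.wr (.inl t) = W.wr t
  gd_inl : ∀ (t : T) (η : V → Option O), Wτ.gd (.inl t) η ↔ W.gd t η
  pre_inr : ∀ i : Fin n, Wτ.pre (.inr i) =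
    .inl '' W.pre (ev i).1 ∪ {q | ∃ j : Fin n, (j : ℕ) + 1 = (i : ℕ) ∧ q = .inr j}
  post_inr : ∀ i : Fin n, Wτ.post (.inr i) = .inl '' W.post (ev i).1 ∪ {.inr i}
  gd_inr : ∀ (i : Fin n) (η : V → Option O), Wτ.gd (.inr i) η → W.gd (ev i).1 η
  wr_inr : ∀ (i : Fin n) (v : V),
    (Wτ.wr (.inr i) v = none ↔ W.wr (ev i).1 v = none) ∧
    (∀ s s' : Set O, Wτ.wr (.inr i) v = some s → W.wr (ev i).1 v = some s' →
      s ⊆ s' ∧ (s = ∅ ↔ s' = ∅))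

/-- The projection `Π_τ` on a single step. -/
def projectStep {n : ℕ} (ev : Fin n → T × ((V → Option O) → Prop))
    (x : (T ⊕ Fin n) × ((P ⊕ Fin n) → ℕ) × (V → Option O)) : T × (P → ℕ) × (V → Option O) :=
  (Sum.elim id (fun i => (ev i).1) x.1, fun p => x.2.1 (.inl p), x.2.2)

/-- The chain marking once the first `k` events have been replayed (none for `k = 0`). -/
def chainMarking (n k : ℕ) : Fin n → ℕ := fun j => if (j : ℕ) + 1 = k then 1 else 0

theorem chainMarking_zero (n : ℕ) : chainMarking n 0 = fun _ => 0 := by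
  funext j
  simp [chainMarking]

theorem FinalW.elim_chainMarking {n : ℕ} {sink : P} {M : P → ℕ} (hf : FinalW sink M) :
    FinalWτ sink (Sum.elim M (chainMarking n n)) :=
  ⟨hf.1, hf.2, fun j =>
    ⟨fun hj => by simp [chainMarking, hj.ne], fun hj => by simp [chainMarking, hj]⟩⟩

namespace IsTraceNet

variable {n : ℕ} {W : DAWNet P T V O} {Wτ : DAWNet (P ⊕ Fin n) (T ⊕ Fin n) V O}
  {ev : Fin n → T × ((V → Option O) → Prop)}

theorem inr_mem_post_iff (hτ : IsTraceNet W Wτ ev) {t : T ⊕ Fin n} {j : Fin n} :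
    .inr j ∈ Wτ.post t ↔ t = .inr j := by
  cases t <;> simp [hτ.post_inl, hτ.post_inr, eq_comm]

theorem inr_mem_pre_inr_iff (hτ : IsTraceNet W Wτ ev) {i j : Fin n} :
    .inr j ∈ Wτ.pre (.inr i) ↔ (j : ℕ) + 1 = i := by
  simp [hτ.pre_inr]

theorem validFiring_proj (hτ : IsTraceNet W Wτ ev) {M M' : P ⊕ Fin n → ℕ}
    {η η' : V → Option O} {t : T ⊕ Fin n} (h : ValidFiring Wτ M η t M' η') :
    ValidFiring W (M ∘ .inl) η (t.elim id fun i => (ev i).1) (M' ∘ .inl) η' := by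
  cases t with
  | inl t =>
    refine h.comap (by simp [hτ.pre_inl]) (by simp [hτ.post_inl]) (hτ.gd_inl t η).1 fun v => ?_
    simp only [hτ.wr_inl]
    exact ⟨Iff.rfl, fun s s' hs hs' => by simp_all⟩
  | inr i =>
    exact h.comap (by simp [hτ.pre_inr]) (by simp [hτ.post_inr]) (hτ.gd_inr i η) (hτ.wr_inr i)

theorem firingSeq_proj (hτ : IsTraceNet W Wτ ev) {s e : (P ⊕ Fin n → ℕ) × (V → Option O)}
    {l : List ((T ⊕ Fin n) × (P ⊕ Fin n → ℕ) × (V → Option O))} (h : FiringSeq Wτ s l e) :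
    FiringSeq W (s.1 ∘ .inl, s.2) (l.map (projectStep ev)) (e.1 ∘ .inl, e.2) := by
  induction h with
  | nil => exact .nil _
  | cons hv _ ih => exact .cons (hτ.validFiring_proj hv) ih

theorem compliant_proj (hτ : IsTraceNet W Wτ ev)
    (hdata : ∀ (i : Fin n) (M : (P ⊕ Fin n) → ℕ) (η : V → Option O)
        (M' : (P ⊕ Fin n) → ℕ) (η' : V → Option O),
      ValidFiring Wτ M η (.inr i) M' η' → (ev i).2 η')
    {s e : (P ⊕ Fin n → ℕ) × (V → Option O)}
    {l : List ((T ⊕ Fin n) × (P ⊕ Fin n → ℕ) × (V → Option O))} (h : FiringSeq Wτ s l e)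
    (hs : ∀ j, s.1 (.inr j) = 0) (hlast : ∀ j : Fin n, (j : ℕ) + 1 = n → 0 < e.1 (.inr j)) :
    Compliant ev (l.map (projectStep ev)) := by
  have hprod (j : Fin n) (t) : .inr j ∈ Wτ.post t → t = .inr j := hτ.inr_mem_post_iff.1
  have hbefore (i j : Fin n) (hij : (i : ℕ) + 1 = j) (q : ℕ) (hq : q < l.length)
      (hqj : l[q].1 = .inr j) : ∃ k < q, ∃ hk : k < l.length, l[k].1 = .inr i :=
    h.exists_fired_before_of_mem_pre (hprod i) (hs i) hq (hqj ▸ hτ.inr_mem_pre_inr_iff.2 hij)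
  have hfired : ∀ i : Fin n, ∃ q, ∃ hq : q < l.length, l[q].1 = .inr i :=
    Fin.forall_of_reverse_step (fun i hi => h.exists_fired_of_pos (hprod i) (hs i) (hlast i hi))
      fun i j hij ⟨q, hq, hqj⟩ => (hbefore i j hij q hq hqj).imp fun _ => And.right
  classical
  let γ i := Nat.find (hfired i)
  have hγ (i : Fin n) : ∃ h : γ i < l.length, l[γ i].1 = .inr i := Nat.find_spec (hfired i)
  refine ⟨fun i => ⟨γ i, by simpa using (hγ i).1⟩,
    Fin.strictMono_of_lt_of_val_add_one_eq fun i j hij => ?_, fun i => ?_⟩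
  · obtain ⟨hj, hjj⟩ := hγ j
    obtain ⟨k, hk, hkl, hki⟩ := hbefore i j hij _ hj hjj
    exact (Nat.find_min' (hfired i) ⟨hkl, hki⟩).trans_lt hk
  · obtain ⟨hi, hii⟩ := hγ i
    obtain ⟨M, η, hv⟩ := h.exists_validFiring_getElem_s13 hi
    rw [hii] at hv
    simp [projectStep, hii, hdata i _ _ _ _ hv]

theorem validFiring_inl (hτ : IsTraceNet W Wτ ev) {M M' : P → ℕ} {η η' : V → Option O} {t : T}
    (h : ValidFiring W M η t M' η') (c : Fin n → ℕ) :
    ValidFiring Wτ (Sum.elim M c) η (.inl t) (Sum.elim M' c) η' := by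
  obtain ⟨hpos, hgd, hM, hwr, hwrn⟩ := h
  refine ⟨?_, (hτ.gd_inl t η).2 hgd, ?_, by simpa only [hτ.wr_inl] using hwr,
    by simpa only [hτ.wr_inl] using hwrn⟩
  · simpa [hτ.pre_inl] using hpos
  · rintro (p | j)
    · simpa [hτ.pre_inl, hτ.post_inl] using hM p
    · simp [hτ.pre_inl, hτ.post_inl]

theorem chainMarking_of_validFiring_inr (hτ : IsTraceNet W Wτ ev) {M M' : P ⊕ Fin n → ℕ}
    {η η' : V → Option O} {i : Fin n} (h : ValidFiring Wτ M η (.inr i) M' η')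
    (hM : M ∘ .inr = chainMarking n i) : M' ∘ .inr = chainMarking n (i + 1) := by
  funext j
  have hj := (h.2.2.1 (.inr j))
  simp only [hτ.inr_mem_pre_inr_iff, hτ.inr_mem_post_iff, Sum.inr.injEq] at hj
  have hMj := congrFun hM j
  simp only [Function.comp_apply, chainMarking] at hMj ⊢
  by_cases hji : i = j
  · subst hji
    rw [hj.2.1 ⟨rfl, by omega⟩, hMj]
    simp
  · by_cases hj1 : (j : ℕ) + 1 = i
    · rw [hj.1 ⟨hj1, hji⟩, hMj]
      simp [hj1]
    · rw [hj.2.2 (iff_of_false hj1 hji), hMj]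
      have : (j : ℕ) ≠ i := Fin.val_ne_of_ne (Ne.symm hji)
      simp [hj1, this]

theorem exists_lift (hτ : IsTraceNet W Wτ ev)
    (hlift : ∀ (i : Fin n) (M : P → ℕ) (η : V → Option O) (M' : P → ℕ) (η' : V → Option O),
      ValidFiring W M η (ev i).1 M' η' → (ev i).2 η' →
      ∀ Mτ : (P ⊕ Fin n) → ℕ, (∀ p, Mτ (Sum.inl p) = M p) →
        (∀ j : Fin n, (j : ℕ) + 1 = (i : ℕ) → 0 < Mτ (Sum.inr j)) →
        ∃ Mτ' : (P ⊕ Fin n) → ℕ,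
          ValidFiring Wτ Mτ η (Sum.inr i) Mτ' η' ∧ ∀ p, Mτ' (Sum.inl p) = M' p)
    {s e : (P → ℕ) × (V → Option O)} {l : List (T × (P → ℕ) × (V → Option O))}
    (h : FiringSeq W s l e) {k : ℕ} (hkn : k ≤ n) (hk : CompliantFrom ev l k) :
    ∃ l', FiringSeq Wτ (Sum.elim s.1 (chainMarking n k), s.2) l'
        (Sum.elim e.1 (chainMarking n n), e.2) ∧ l'.map (projectStep ev) = l := by
  induction h generalizing k with
  | nil =>
    obtain rfl : k = n := le_antisymm hkn hk.le_of_nil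
    exact ⟨[], .nil _, rfl⟩
  | @cons s t M' η' l e hv _ ih =>
    rcases hk.of_cons with ⟨hkn', rfl, hdat, hk'⟩ | hk'
    · obtain ⟨Mτ', hvτ, hinl⟩ := hlift ⟨k, hkn'⟩ s.1 s.2 M' η' hv hdat
        (Sum.elim s.1 (chainMarking n k)) (fun _ => rfl) fun j hj => by simp [chainMarking, hj]
      have hinr := hτ.chainMarking_of_validFiring_inr hvτ rfl
      have hMτ' : Mτ' = Sum.elim M' (chainMarking n (k + 1)) := by
        funext x
        rcases x with p | j
        · exact hinl p
        · exact congrFun hinr j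
      obtain ⟨l', hl', hmap⟩ := ih hkn' hk'
      refine ⟨(.inr ⟨k, hkn'⟩, Mτ', η') :: l', .cons hvτ (hMτ' ▸ hl'), ?_⟩
      simp [projectStep, hmap, hMτ']
    · obtain ⟨l', hl', hmap⟩ := ih hkn hk'
      exact ⟨(.inl t, Sum.elim M' (chainMarking n k), η') :: l',
        .cons (hτ.validFiring_inl hv _) hl', by simp [projectStep, hmap]⟩

end IsTraceNet

end

theorem trace_workflow_cases_characterization_general {P T V O : Type} {n : ℕ}
    (W : DAWNet P T V O) (Wτ : DAWNet (P ⊕ Fin n) (T ⊕ Fin n) V O)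
    (ev : Fin n → T × ((V → Option O) → Prop)) (sink : P)
    (hpreT : ∀ t : T, Wτ.pre (Sum.inl t) = Sum.inl '' W.pre t)
    (hpostT : ∀ t : T, Wτ.post (Sum.inl t) = Sum.inl '' W.post t)
    (hwrT : ∀ t : T, Wτ.wr (Sum.inl t) = W.wr t)
    (hgdT : ∀ (t : T) (η : V → Option O), Wτ.gd (Sum.inl t) η ↔ W.gd t η)
    (hpreE : ∀ i : Fin n, Wτ.pre (Sum.inr i) =
      Sum.inl '' W.pre (ev i).1 ∪ {q | ∃ j : Fin n, (j : ℕ) + 1 = (i : ℕ) ∧ q = Sum.inr j})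
    (hpostE : ∀ i : Fin n, Wτ.post (Sum.inr i) = Sum.inl '' W.post (ev i).1 ∪ {Sum.inr i})
    (hgdE : ∀ (i : Fin n) (η : V → Option O), Wτ.gd (Sum.inr i) η → W.gd (ev i).1 η)
    (hwrE : ∀ (i : Fin n) (v : V),
      (Wτ.wr (Sum.inr i) v = none ↔ W.wr (ev i).1 v = none) ∧
      (∀ s s' : Set O, Wτ.wr (Sum.inr i) v = some s → W.wr (ev i).1 v = some s' →
        s ⊆ s' ∧ (s = ∅ ↔ s' = ∅)))
    (hdata : ∀ (i : Fin n) (M : (P ⊕ Fin n) → ℕ) (η : V → Option O)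
        (M' : (P ⊕ Fin n) → ℕ) (η' : V → Option O),
      ValidFiring Wτ M η (Sum.inr i) M' η' → (ev i).2 η')
    (hlift : ∀ (i : Fin n) (M : P → ℕ) (η : V → Option O) (M' : P → ℕ) (η' : V → Option O),
      ValidFiring W M η (ev i).1 M' η' → (ev i).2 η' →
      ∀ Mτ : (P ⊕ Fin n) → ℕ, (∀ p, Mτ (Sum.inl p) = M p) →
        (∀ j : Fin n, (j : ℕ) + 1 = (i : ℕ) → 0 < Mτ (Sum.inr j)) →
        ∃ Mτ' : (P ⊕ Fin n) → ℕ,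
          ValidFiring Wτ Mτ η (Sum.inr i) Mτ' η' ∧ ∀ p, Mτ' (Sum.inl p) = M' p)
    (M0 : P → ℕ) :
    (∀ (l : List ((T ⊕ Fin n) × ((P ⊕ Fin n) → ℕ) × (V → Option O)))
        (e : ((P ⊕ Fin n) → ℕ) × (V → Option O)),
      FiringSeq Wτ (Sum.elim M0 (fun _ => 0), fun _ => none) l e → FinalWτ sink e.1 →
        FiringSeq W (M0, fun _ => none)
          (l.map fun x =>
            (Sum.elim id (fun i => (ev i).1) x.1, fun p => x.2.1 (Sum.inl p), x.2.2))
          ((fun p => e.1 (Sum.inl p)), e.2) ∧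
        FinalW sink (fun p => e.1 (Sum.inl p)) ∧
        Compliant ev
          (l.map fun x =>
            (Sum.elim id (fun i => (ev i).1) x.1, fun p => x.2.1 (Sum.inl p), x.2.2))) ∧
    (∀ (l : List (T × (P → ℕ) × (V → Option O))) (e : (P → ℕ) × (V → Option O)),
      FiringSeq W (M0, fun _ => none) l e → FinalW sink e.1 → Compliant ev l →
        ∃ (l' : List ((T ⊕ Fin n) × ((P ⊕ Fin n) → ℕ) × (V → Option O)))
          (e' : ((P ⊕ Fin n) → ℕ) × (V → Option O)),
          FiringSeq Wτ (Sum.elim M0 (fun _ => 0), fun _ => none) l' e' ∧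
          FinalWτ sink e'.1 ∧
          (l'.map fun x =>
            (Sum.elim id (fun i => (ev i).1) x.1, fun p => x.2.1 (Sum.inl p), x.2.2)) = l ∧
          (fun p => e'.1 (Sum.inl p)) = e.1 ∧ e'.2 = e.2) := by
  have hτ : IsTraceNet W Wτ ev := ⟨hpreT, hpostT, hwrT, hgdT, hpreE, hpostE, hgdE, hwrE⟩
  refine ⟨fun l e h hf => ⟨hτ.firingSeq_proj h, ⟨hf.1, hf.2.1⟩,
    hτ.compliant_proj hdata h (fun _ => rfl) fun j hj => (hf.2.2 j).2 hj ▸ one_pos⟩,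
    fun l e h hf hc => ?_⟩
  obtain ⟨l', hl', hmap⟩ := hτ.exists_lift hlift h (Nat.zero_le n) (.of_compliant hc)
  exact ⟨l', _, chainMarking_zero n ▸ hl', hf.elim_chainMarking, hmap, rfl, rfl⟩

/-- Cases of the trace workflow exactly characterize the compliant cases of the original
workflow: (1) the projection of every case of `Wτ` is a case of `W` with which the full
trace is compliant; (2) every case of `W` with which the trace is compliant lifts to a
case of `Wτ` projecting back onto it. -/
theorem trace_workflow_cases_characterization {P T V O : Type} {n : ℕ}
    (W : DAWNet P T V O) (Wτ : DAWNet (P ⊕ Fin n) (T ⊕ Fin n) V O)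
    (ev : Fin n → T × ((V → Option O) → Prop)) (start sink : P)
    (hpreT : ∀ t : T, Wτ.pre (Sum.inl t) = Sum.inl '' W.pre t)
    (hpostT : ∀ t : T, Wτ.post (Sum.inl t) = Sum.inl '' W.post t)
    (hwrT : ∀ t : T, Wτ.wr (Sum.inl t) = W.wr t)
    (hgdT : ∀ (t : T) (η : V → Option O), Wτ.gd (Sum.inl t) η ↔ W.gd t η)
    (hpreE : ∀ i : Fin n, Wτ.pre (Sum.inr i) =
      Sum.inl '' W.pre (ev i).1 ∪ {q | ∃ j : Fin n, (j : ℕ) + 1 = (i : ℕ) ∧ q = Sum.inr j})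
    (hpostE : ∀ i : Fin n, Wτ.post (Sum.inr i) = Sum.inl '' W.post (ev i).1 ∪ {Sum.inr i})
    (hgdE : ∀ (i : Fin n) (η : V → Option O), Wτ.gd (Sum.inr i) η → W.gd (ev i).1 η)
    (hwrE : ∀ (i : Fin n) (v : V),
      (Wτ.wr (Sum.inr i) v = none ↔ W.wr (ev i).1 v = none) ∧
      (∀ s s' : Set O, Wτ.wr (Sum.inr i) v = some s → W.wr (ev i).1 v = some s' →
        s ⊆ s' ∧ (s = ∅ ↔ s' = ∅)))
    (hdata : ∀ (i : Fin n) (M : (P ⊕ Fin n) → ℕ) (η : V → Option O)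
        (M' : (P ⊕ Fin n) → ℕ) (η' : V → Option O),
      ValidFiring Wτ M η (Sum.inr i) M' η' → (ev i).2 η')
    (hlift : ∀ (i : Fin n) (M : P → ℕ) (η : V → Option O) (M' : P → ℕ) (η' : V → Option O),
      ValidFiring W M η (ev i).1 M' η' → (ev i).2 η' →
      ∀ Mτ : (P ⊕ Fin n) → ℕ, (∀ p, Mτ (Sum.inl p) = M p) →
        (∀ j : Fin n, (j : ℕ) + 1 = (i : ℕ) → 0 < Mτ (Sum.inr j)) →
        ∃ Mτ' : (P ⊕ Fin n) → ℕ,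
          ValidFiring Wτ Mτ η (Sum.inr i) Mτ' η' ∧ ∀ p, Mτ' (Sum.inl p) = M' p)
    (M0 : P → ℕ)
    (hM0 : M0 start = 1 ∧ ∀ p, p ≠ start → M0 p = 0) :
    (∀ (l : List ((T ⊕ Fin n) × ((P ⊕ Fin n) → ℕ) × (V → Option O)))
        (e : ((P ⊕ Fin n) → ℕ) × (V → Option O)),
      FiringSeq Wτ (Sum.elim M0 (fun _ => 0), fun _ => none) l e → FinalWτ sink e.1 →
        FiringSeq W (M0, fun _ => none)
          (l.map fun x =>
            (Sum.elim id (fun i => (ev i).1) x.1, fun p => x.2.1 (Sum.inl p), x.2.2))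
          ((fun p => e.1 (Sum.inl p)), e.2) ∧
        FinalW sink (fun p => e.1 (Sum.inl p)) ∧
        Compliant ev
          (l.map fun x =>
            (Sum.elim id (fun i => (ev i).1) x.1, fun p => x.2.1 (Sum.inl p), x.2.2))) ∧
    (∀ (l : List (T × (P → ℕ) × (V → Option O))) (e : (P → ℕ) × (V → Option O)),
      FiringSeq W (M0, fun _ => none) l e → FinalW sink e.1 → Compliant ev l →
        ∃ (l' : List ((T ⊕ Fin n) × ((P ⊕ Fin n) → ℕ) × (V → Option O)))
          (e' : ((P ⊕ Fin n) → ℕ) × (V → Option O)),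
          FiringSeq Wτ (Sum.elim M0 (fun _ => 0), fun _ => none) l' e' ∧
          FinalWτ sink e'.1 ∧
          (l'.map fun x =>
            (Sum.elim id (fun i => (ev i).1) x.1, fun p => x.2.1 (Sum.inl p), x.2.2)) = l ∧
          (fun p => e'.1 (Sum.inl p)) = e.1 ∧ e'.2 = e.2) :=
  trace_workflow_cases_characterization_general W Wτ ev sink hpreT hpostT hwrT hgdT hpreE hpostE
    hgdE hwrE hdata hlift M0
end

section
/- The reachability graph of a DAW-net is identical to the reachability graph of its finite (active-domain) version: restricting each variable's domain to its active domain (the union over all transitions of the values the transition can write) does not change the set of reachable states or the transition relation of the reachability graph. -/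
/-- One step of the reachability graph: some transition admits a valid firing. -/
def stepRel {P T V O : Type} (W : DAWNet P T V O)
    (s s' : (P → ℕ) × (V → Option O)) : Prop :=
  ∃ t, ValidFiring W s.1 s.2 t s'.1 s'.2

/-- An assignment takes values in the active domain: every value it assigns can be
written by some transition (`adm v = ⋃_{t} wr t v`). -/
def admissible {P T V O : Type} (W : DAWNet P T V O) (η : V → Option O) : Prop :=
  ∀ v o, η v = some o → ∃ (t : T) (s : Set O), W.wr t v = some s ∧ o ∈ s

/-- A step of the finite (active-domain) version of the net: the same valid firings,
between states whose assignments take values in the active domains. -/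
def stepRelFin {P T V O : Type} (W : DAWNet P T V O)
    (s s' : (P → ℕ) × (V → Option O)) : Prop :=
  stepRel W s s' ∧ admissible W s.2 ∧ admissible W s'.2

/-!
A firing writes each variable either nothing or a value from the set the transition may write
there, so assignments with values in the active domains stay so after firing. The initial empty
assignment has this property, hence so has every reachable state, and the active-domain side
conditions of the finite version hold automatically along every run of the original net.
-/

namespace DAWNet

variable {P T V O : Type} {W : DAWNet P T V O}

lemma admissible_none : admissible W (fun _ : V => (none : Option O)) :=
  fun _ _ => nofun

lemma _root_.ValidFiring.admissible {M M' : P → ℕ} {η η' : V → Option O} {t : T}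
    (h : ValidFiring W M η t M' η') (hη : admissible W η) : admissible W η' := by
  obtain ⟨-, -, -, hwritten, hkept⟩ := h
  intro v o hvo
  cases hw : W.wr t v with
  | none => exact hη v o (hkept v hw ▸ hvo)
  | some s =>
    obtain ⟨hempty, hnonempty⟩ := hwritten v s hw
    rcases s.eq_empty_or_nonempty with rfl | hs
    · simp [hempty rfl] at hvo
    · obtain ⟨o', ho', hv⟩ := hnonempty hs
      obtain rfl : o = o' := Option.some.inj (hvo ▸ hv)
      exact ⟨t, s, hw, ho'⟩

lemma admissible_of_reflTransGen {s s' : (P → ℕ) × (V → Option O)}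
    (h : Relation.ReflTransGen (stepRel W) s s') (hs : admissible W s.2) :
    admissible W s'.2 := by
  induction h with
  | refl => exact hs
  | tail _ hstep ih =>
    obtain ⟨t, hf⟩ := hstep
    exact hf.admissible ih

lemma reflTransGen_stepRelFin_iff {s s' : (P → ℕ) × (V → Option O)}
    (hs : admissible W s.2) :
    Relation.ReflTransGen (stepRelFin W) s s' ↔ Relation.ReflTransGen (stepRel W) s s' := by
  refine ⟨Relation.ReflTransGen.mono (fun _ _ (h : stepRelFin W _ _) => h.1) s s', fun h => ?_⟩
  induction h with
  | refl => exact .refl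
  | tail hab hbc ih =>
    exact ih.tail ⟨hbc, admissible_of_reflTransGen hab hs,
      admissible_of_reflTransGen (hab.tail hbc) hs⟩

end DAWNet

/-- The reachability graph of a DAW-net is identical to the reachability graph of its
finite (active-domain) version: starting from the initial state (whose assignment is
empty), the reachable states coincide, and on reachable states the transition relations
coincide. -/
theorem finite_version_same_reachability_graph {P T V O : Type}
    (W : DAWNet P T V O) (M0 : P → ℕ) :
    ({s | Relation.ReflTransGen (stepRel W)
        ((M0, fun _ => none) : (P → ℕ) × (V → Option O)) s} =
      {s | Relation.ReflTransGen (stepRelFin W)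
        ((M0, fun _ => none) : (P → ℕ) × (V → Option O)) s}) ∧
    (∀ (s s' : (P → ℕ) × (V → Option O)) (t : T),
      Relation.ReflTransGen (stepRel W)
        ((M0, fun _ => none) : (P → ℕ) × (V → Option O)) s →
      (ValidFiring W s.1 s.2 t s'.1 s'.2 ↔
        (ValidFiring W s.1 s.2 t s'.1 s'.2 ∧ admissible W s.2 ∧ admissible W s'.2))) :=
  ⟨Set.ext fun _ => (DAWNet.reflTransGen_stepRelFin_iff DAWNet.admissible_none).symm,
    fun _ _ t hs => ⟨fun hf => ⟨hf, DAWNet.admissible_of_reflTransGen hs DAWNet.admissible_none,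
      DAWNet.admissible_of_reflTransGen (hs.tail ⟨t, hf⟩) DAWNet.admissible_none⟩,
      And.left⟩⟩
end

section
/- The query translation into PDDL preconditions preserves satisfaction: for every DAW-net state (M, η) and every guard Φ of the guard language, the data model with assignment η satisfies Φ if and only if the planning state Ψ(M, η) satisfies the translated precondition formula trans(Φ), where Ψ maps each defined variable v to η(v), each undefined variable to null, each marked place to true and each unmarked place to false. -/
/-- Terms of the guard language: variables or constants. -/
inductive GTerm (V O : Type) where
  | var (v : V)
  | const (o : O)

/-- Guards of the DAW-net guard language. -/
inductive Guard (V O : Type) where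
  | tru
  | defd (v : V)
  | eq (v : V) (t : GTerm V O)
  | le (t1 t2 : GTerm V O)
  | not (g : Guard V O)
  | and (g1 g2 : Guard V O)

/-- Evaluation of a term under a (partial) assignment. -/
def evalT {V O : Type} (η : V → Option O) : GTerm V O → Option O
  | .var v => η v
  | .const o => some o

/-- DAW-net semantics of guards over a partial assignment `η`, with `rel` the partial
order on the domains. -/
def gsat {V O : Type} (rel : O → O → Prop) (η : V → Option O) : Guard V O → Prop
  | .tru => True
  | .defd v => (η v).isSome
  | .eq v t => ∃ o, η v = some o ∧ evalT η t = some o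
  | .le t1 t2 => ∃ o1 o2, evalT η t1 = some o1 ∧ evalT η t2 = some o2 ∧ rel o1 o2
  | .not g => ¬ gsat rel η g
  | .and g1 g2 => gsat rel η g1 ∧ gsat rel η g2

/-- PDDL precondition formulas produced by the translation (with `null` represented by
`none` in planning states). -/
inductive PForm (V O : Type) where
  | tru
  | eqNull (v : V)
  | eqAtom (v : V) (t : GTerm V O)
  | ordAtom (t1 t2 : GTerm V O)
  | not (f : PForm V O)
  | and (f1 f2 : PForm V O)

/-- The translation of guards into PDDL preconditions. -/
def transG {V O : Type} : Guard V O → PForm V O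
  | .tru => .tru
  | .defd v => .not (.eqNull v)
  | .eq v t => .and (.not (.eqNull v)) (.eqAtom v t)
  | .le t1 t2 => .ordAtom t1 t2
  | .not g => .not (transG g)
  | .and g1 g2 => .and (transG g1) (transG g2)

/-- Satisfaction of PDDL precondition formulas in a planning state (the variable part of
a planning state is a total map into the domain extended with `null = none`; the atom
`ord(t1,t2)` holds iff the values are related by the rigid order relation). -/
def psat {V O : Type} (rel : O → O → Prop) (s : V → Option O) : PForm V O → Prop
  | .tru => True
  | .eqNull v => s v = none
  | .eqAtom v t => s v = evalT s t
  | .ordAtom t1 t2 => ∃ o1 o2, evalT s t1 = some o1 ∧ evalT s t2 = some o2 ∧ rel o1 o2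
  | .not f => ¬ psat rel s f
  | .and f1 f2 => psat rel s f1 ∧ psat rel s f2

/-- The variable part of `Ψ(M, η)` : each defined variable is mapped to its value and
each undefined variable to `null` (here `none`). -/
def PsiVar {V O : Type} (η : V → Option O) : V → Option O := η

theorem Option.exists_eq_some_and_eq_some_iff {α : Type*} {a b : Option α} :
    (∃ o, a = some o ∧ b = some o) ↔ a ≠ none ∧ a = b := by
  constructor
  · rintro ⟨o, rfl, rfl⟩
    exact ⟨Option.some_ne_none o, rfl⟩
  · rintro ⟨ha, rfl⟩
    obtain ⟨o, rfl⟩ := Option.ne_none_iff_exists'.mp ha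
    exact ⟨o, rfl, rfl⟩

theorem gsat_iff_psat_transG {V O : Type} (rel : O → O → Prop) (η : V → Option O)
    (g : Guard V O) : gsat rel η g ↔ psat rel η (transG g) := by
  induction g with
  | tru => rfl
  | defd v => exact Option.isSome_iff_ne_none
  -- without the conjunct `¬(v = null)`, an undefined `v` would satisfy `v = w` for undefined `w`
  | eq v t => exact Option.exists_eq_some_and_eq_some_iff
  | le t1 t2 => rfl
  | not g ih => exact not_congr ih
  | and g1 g2 ih1 ih2 => exact and_congr ih1 ih2

theorem query_translation_preserves_satisfaction_general {V O : Type}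
    (rel : O → O → Prop) (η : V → Option O) (g : Guard V O) :
    gsat rel η g ↔ psat rel (PsiVar η) (transG g) :=
  gsat_iff_psat_transG rel η g

/-- The query translation into PDDL preconditions preserves satisfaction: for every
DAW-net state `(M, η)` and guard `Φ`, `D, η ⊨ Φ` iff the planning state `Ψ(M, η)`
satisfies the translated precondition `trans(Φ)`. -/
theorem query_translation_preserves_satisfaction {P V O : Type}
    (rel : O → O → Prop) (M : P → ℕ) (η : V → Option O) (g : Guard V O) :
    gsat rel η g ↔ psat rel (PsiVar η) (transG g) :=
  query_translation_preserves_satisfaction_general rel η g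
end
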